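/- Every simple graph with maximum degree at most 3 is 2-subcolorable: its vertex set can be partitioned into two sets, each of which induces a graph with no induced path on three vertices. -/
import Mathlib


/-- A set `S` of vertices induces a cluster graph (no induced `P₃`):
any two vertices at distance two within `S` must in fact be adjacent. -/
def IsClusterOn {V : Type*} (G : SimpleGraph V) (S : Finset V) : Prop :=
  ∀ a ∈ S, ∀ b ∈ S, ∀ c ∈ S, G.Adj a b → G.Adj b c → a ≠ c → G.Adj a c

section Aux

variable {V : Type*} [Fintype V] [DecidableEq V] (G : SimpleGraph V) [DecidableRel G.Adj]

/-- Neighbors of `v` on the same side of the partition determined by `S`. -/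
def sameNb (S : Finset V) (v : V) : Finset V :=
  (G.neighborFinset v).filter (fun u => u ∈ S ↔ v ∈ S)

/-- Ordered monochromatic adjacent pairs. -/
def badPairs (S : Finset V) : Finset (V × V) :=
  Finset.univ.filter (fun p => G.Adj p.1 p.2 ∧ (p.1 ∈ S ↔ p.2 ∈ S))

lemma card_fst (S : Finset V) (v : V) :
    ((badPairs G S).filter (fun p => p.1 = v)).card = (sameNb G S v).card := by
  have e : (badPairs G S).filter (fun p => p.1 = v)
      = (sameNb G S v).image (fun u => (v, u)) := by
    ext ⟨a, b⟩
    simp only [badPairs, sameNb, Finset.mem_filter, Finset.mem_univ, true_and,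
      Finset.mem_image, SimpleGraph.mem_neighborFinset, Prod.mk.injEq]
    constructor
    · rintro ⟨⟨hadj, hiff⟩, rfl⟩
      exact ⟨b, ⟨hadj, hiff.symm⟩, rfl, rfl⟩
    · rintro ⟨u, ⟨h1, h2⟩, rfl, rfl⟩
      exact ⟨⟨h1, h2.symm⟩, rfl⟩
  rw [e, Finset.card_image_of_injective]
  intro a b hab
  exact (Prod.mk.injEq _ _ _ _).mp hab |>.2

lemma card_snd (S : Finset V) (v : V) :
    ((badPairs G S).filter (fun p => p.2 = v)).card = (sameNb G S v).card := by
  have e : (badPairs G S).filter (fun p => p.2 = v)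
      = (sameNb G S v).image (fun u => (u, v)) := by
    ext ⟨a, b⟩
    simp only [badPairs, sameNb, Finset.mem_filter, Finset.mem_univ, true_and,
      Finset.mem_image, SimpleGraph.mem_neighborFinset, Prod.mk.injEq]
    constructor
    · rintro ⟨⟨hadj, hiff⟩, rfl⟩
      exact ⟨a, ⟨hadj.symm, hiff⟩, rfl, rfl⟩
    · rintro ⟨u, ⟨h1, h2⟩, rfl, rfl⟩
      exact ⟨⟨h1.symm, h2⟩, rfl⟩
  rw [e, Finset.card_image_of_injective]
  intro a b hab
  exact (Prod.mk.injEq _ _ _ _).mp hab |>.1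

lemma bad_decomp (S : Finset V) (v : V) :
    (badPairs G S).card = 2 * (sameNb G S v).card +
      ((badPairs G S).filter (fun p => p.1 ≠ v ∧ p.2 ≠ v)).card := by
  have h1 := Finset.card_filter_add_card_filter_not
    (s := badPairs G S) (p := fun p => p.1 = v)
  have h2 := Finset.card_filter_add_card_filter_not
    (s := (badPairs G S).filter (fun p => ¬ p.1 = v)) (p := fun p => p.2 = v)
  rw [Finset.filter_filter, Finset.filter_filter] at h2
  have e : (badPairs G S).filter (fun p => ¬ p.1 = v ∧ p.2 = v)
      = (badPairs G S).filter (fun p => p.2 = v) := by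
    ext ⟨a, b⟩
    simp only [badPairs, Finset.mem_filter, Finset.mem_univ, true_and]
    constructor
    · rintro ⟨h, _, rfl⟩; exact ⟨h, rfl⟩
    · rintro ⟨h, rfl⟩; exact ⟨h, G.ne_of_adj h.1, rfl⟩
  rw [e, card_snd] at h2
  rw [card_fst] at h1
  have e2 : (badPairs G S).filter (fun a : V × V => ¬ a.1 = v ∧ ¬ a.2 = v)
      = (badPairs G S).filter (fun p => p.1 ≠ v ∧ p.2 ≠ v) := rfl
  rw [e2] at h2
  omega

lemma rest_eq (S T : Finset V) (v : V) (hST : ∀ u, u ≠ v → (u ∈ S ↔ u ∈ T)) :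
    (badPairs G S).filter (fun p => p.1 ≠ v ∧ p.2 ≠ v)
      = (badPairs G T).filter (fun p => p.1 ≠ v ∧ p.2 ≠ v) := by
  ext ⟨a, b⟩
  simp only [badPairs, Finset.mem_filter, Finset.mem_univ, true_and]
  constructor
  · rintro ⟨⟨hadj, hiff⟩, ha, hb⟩
    exact ⟨⟨hadj, by rw [← hST a ha, ← hST b hb]; exact hiff⟩, ha, hb⟩
  · rintro ⟨⟨hadj, hiff⟩, ha, hb⟩
    exact ⟨⟨hadj, by rw [hST a ha, hST b hb]; exact hiff⟩, ha, hb⟩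

end Aux

/-- Every simple graph with maximum degree at most 3 is 2-subcolorable. -/
theorem maxDegree_le_three_imp_twoSubcolorable {V : Type*} [Fintype V]
    [DecidableEq V] (G : SimpleGraph V) [DecidableRel G.Adj]
    (h : G.maxDegree ≤ 3) :
    ∃ V1 V2 : Finset V, V1 ∪ V2 = Finset.univ ∧ Disjoint V1 V2 ∧
      IsClusterOn G V1 ∧ IsClusterOn G V2 := by
  obtain ⟨S, -, hmin⟩ := Finset.exists_min_image (Finset.univ : Finset (Finset V))
    (fun S => (badPairs G S).card) ⟨∅, Finset.mem_univ ∅⟩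
  -- Key claim: every vertex has at most one same-side neighbor.
  have key : ∀ v : V, (sameNb G S v).card ≤ 1 := by
    intro v
    by_contra hc
    push_neg at hc
    -- the opposite-side neighbor count
    have hdeg : (sameNb G S v).card +
        ((G.neighborFinset v).filter (fun u => ¬ (u ∈ S ↔ v ∈ S))).card ≤ 3 := by
      have := Finset.card_filter_add_card_filter_not
        (s := G.neighborFinset v) (p := fun u => u ∈ S ↔ v ∈ S)
      have hd : (G.neighborFinset v).card ≤ 3 := by
        rw [SimpleGraph.card_neighborFinset_eq_degree]
        exact le_trans (G.degree_le_maxDegree v) h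
      unfold sameNb
      omega
    set T : Finset V := if v ∈ S then S.erase v else insert v S with hT
    have hvT : (v ∈ T) ↔ ¬ (v ∈ S) := by
      by_cases hv : v ∈ S <;> simp [hT, hv]
    have hST : ∀ u, u ≠ v → (u ∈ S ↔ u ∈ T) := by
      intro u hu
      by_cases hv : v ∈ S <;> simp [hT, hv, hu]
    have hTnb : sameNb G T v = (G.neighborFinset v).filter (fun u => ¬ (u ∈ S ↔ v ∈ S)) := by
      ext u
      simp only [sameNb, Finset.mem_filter, SimpleGraph.mem_neighborFinset]
      constructor
      · rintro ⟨hadj, hiff⟩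
        refine ⟨hadj, ?_⟩
        have huv : u ≠ v := fun h' => G.ne_of_adj hadj (by rw [h'])
        rw [hST u huv]
        rw [hvT] at hiff
        tauto
      · rintro ⟨hadj, hne⟩
        refine ⟨hadj, ?_⟩
        have huv : u ≠ v := fun h' => G.ne_of_adj hadj (by rw [h'])
        rw [← hST u huv, hvT]
        tauto
    have hless : (badPairs G T).card < (badPairs G S).card := by
      rw [bad_decomp G S v, bad_decomp G T v, rest_eq G S T v hST, hTnb]
      omega
    exact absurd (hmin T (Finset.mem_univ T)) (by omega)
  refine ⟨S, Finset.univ \ S, by simp [Finset.union_sdiff_of_subset], Finset.disjoint_sdiff, ?_, ?_⟩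
  · intro a ha b hb c hc hab hbc hac
    exfalso
    have hsub : {a, c} ⊆ sameNb G S b := by
      intro x hx
      simp only [Finset.mem_insert, Finset.mem_singleton] at hx
      rcases hx with rfl | rfl
      · simp [sameNb, SimpleGraph.mem_neighborFinset, hab.symm, ha, hb]
      · simp [sameNb, SimpleGraph.mem_neighborFinset, hbc, hc, hb]
    have : ({a, c} : Finset V).card ≤ 1 := le_trans (Finset.card_le_card hsub) (key b)
    rw [Finset.card_insert_of_notMem (by simp [hac]), Finset.card_singleton] at this
    omega
  · intro a ha b hb c hc hab hbc hac
    exfalso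
    simp only [Finset.mem_sdiff, Finset.mem_univ, true_and] at ha hb hc
    have hsub : {a, c} ⊆ sameNb G S b := by
      intro x hx
      simp only [Finset.mem_insert, Finset.mem_singleton] at hx
      rcases hx with rfl | rfl
      · simp [sameNb, SimpleGraph.mem_neighborFinset, hab.symm, ha, hb]
      · simp [sameNb, SimpleGraph.mem_neighborFinset, hbc, hc, hb]
    have : ({a, c} : Finset V).card ≤ 1 := le_trans (Finset.card_le_card hsub) (key b)
    rw [Finset.card_insert_of_notMem (by simp [hac]), Finset.card_singleton] at this
    omega
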